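/- arXiv:2001.09380 — 4 statements merged into one kernel-verified Lean document; each statement's English description precedes it below -/
import Mathlib

section
/- The function f(x) = -30·cosh(3x) - 18·cosh(5x) + 10·sinh(7x) + 15(1-K)·cosh(8x), where K = ∫₀¹ (1/x²)(1/√(1-x⁴) - 1) dx, is increasing on [0, ∞). -/
/-!
Since `f' x = -90 sinh 3x - 90 sinh 5x + 70 cosh 7x + 120 (1 - K) sinh 8x`, it suffices to show
`K ≤ 5/6`, which makes the last coefficient at least `20`, and that the combination with `20` is
nonnegative for `x ≥ 0`. The latter becomes, after multiplying by `2 e^{8x}`, a polynomial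
inequality in `u = e^x ≥ 1`. For the bound on `K`, write the integrand as `x² / (a (1 + a))` with
`a = √(1 - x⁴)`; replacing `a` by the smaller `√(1 - x)` gives `(1 - x)^{-1/2} - (1 - x)^{1/2} - x`,
whose integral over `[0, 1]` is `2 - 2/3 - 1/2 = 5/6`.
-/

open Real

noncomputable def K : ℝ := ∫ x in (0:ℝ)..1, (1 / x ^ 2) * (1 / Real.sqrt (1 - x ^ 4) - 1)

noncomputable def f (x : ℝ) : ℝ :=
  -30 * Real.cosh (3 * x) - 18 * Real.cosh (5 * x) + 10 * Real.sinh (7 * x)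
    + 15 * (1 - K) * Real.cosh (8 * x)

open intervalIntegral MeasureTheory

lemma intervalIntegrable_one_sub_rpow {r : ℝ} (hr : -1 < r) :
    IntervalIntegrable (fun x : ℝ => (1 - x) ^ r) volume 0 1 := by
  have h := ((intervalIntegrable_rpow' (a := 0) (b := 1) hr).comp_sub_left 1).symm
  simpa using h

lemma integral_one_sub_rpow {r : ℝ} (hr : -1 < r) :
    ∫ x in (0:ℝ)..1, (1 - x) ^ r = 1 / (r + 1) := by
  rw [integral_comp_sub_left (fun x => x ^ r), integral_rpow (Or.inl hr), sub_zero, sub_self,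
    zero_rpow (by linarith), one_rpow, sub_zero]

lemma K_integrand_le {x : ℝ} (hx : x ∈ Set.Ioo (0:ℝ) 1) :
    1 / x ^ 2 * (1 / √(1 - x ^ 4) - 1) ≤ (1 - x) ^ (-(1/2) : ℝ) - (1 - x) ^ (1/2 : ℝ) - x := by
  obtain ⟨hx0, hx1⟩ := hx
  have hx4 : 0 < 1 - x ^ 4 := by nlinarith [pow_lt_one₀ hx0.le hx1 (n := 4) (by norm_num)]
  set a := √(1 - x ^ 4)
  set s := √(1 - x) with hs_def
  have ha : 0 < a := sqrt_pos.2 hx4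
  have hs : 0 < s := sqrt_pos.2 (by linarith)
  have hsa : s ≤ a := sqrt_le_sqrt (by nlinarith [pow_le_one₀ hx0.le hx1.le (n := 3)])
  have hlhs : 1 / x ^ 2 * (1 / a - 1) = x ^ 2 / (a * (1 + a)) := by
    field_simp
    linear_combination -sq_sqrt hx4.le
  have hrhs : (1 - x) ^ (-(1/2) : ℝ) - (1 - x) ^ (1/2 : ℝ) - x = x ^ 2 / (s * (1 + s)) := by
    rw [rpow_neg (by linarith), ← sqrt_eq_rpow, ← hs_def]
    field_simp
    linear_combination -(x + 1 + s) * sq_sqrt (show 0 ≤ 1 - x by linarith)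
  rw [hlhs, hrhs]
  gcongr

lemma integral_K_majorant :
    ∫ x in (0:ℝ)..1, ((1 - x) ^ (-(1/2) : ℝ) - (1 - x) ^ (1/2 : ℝ) - x) = 5 / 6 := by
  have hneg := intervalIntegrable_one_sub_rpow (r := -(1/2)) (by norm_num)
  have hpos := intervalIntegrable_one_sub_rpow (r := 1/2) (by norm_num)
  rw [integral_sub (hneg.sub hpos) intervalIntegrable_id, integral_sub hneg hpos,
    integral_one_sub_rpow (by norm_num), integral_one_sub_rpow (by norm_num), integral_id]
  norm_num

lemma K_le_five_sixths : K ≤ 5 / 6 := by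
  by_cases hint : IntervalIntegrable (fun x : ℝ => 1 / x ^ 2 * (1 / √(1 - x ^ 4) - 1)) volume 0 1
  · have hbound := ((intervalIntegrable_one_sub_rpow (r := -(1/2)) (by norm_num)).sub
      (intervalIntegrable_one_sub_rpow (r := 1/2) (by norm_num))).sub intervalIntegrable_id
    rw [← integral_K_majorant]
    exact integral_mono_on_of_le_Ioo zero_le_one hint hbound fun x hx => K_integrand_le hx
  · rw [K, integral_undef hint]
    norm_num

lemma poly_nonneg_of_one_le {u : ℝ} (hu : 1 ≤ u) :
    0 ≤ 20 * (u ^ 16 - 1) + 70 * (u ^ 15 + u) + 90 * (u ^ 5 + u ^ 3) - 90 * (u ^ 13 + u ^ 11) := by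
  obtain ⟨t, ht, rfl⟩ : ∃ t, 0 ≤ t ∧ u = 1 + t := ⟨u - 1, by linarith, by ring⟩
  -- in `t = u - 1` the polynomial is `140 - 1050 t^2 + 38350 t^4` plus nonnegative terms
  nlinarith [sq_nonneg (73 * t ^ 2 - 1), pow_nonneg ht 3, pow_nonneg ht 5,
      pow_nonneg ht 6, pow_nonneg ht 7, pow_nonneg ht 8, pow_nonneg ht 9, pow_nonneg ht 10,
      pow_nonneg ht 11, pow_nonneg ht 12, pow_nonneg ht 13, pow_nonneg ht 14, pow_nonneg ht 15,
      pow_nonneg ht 16]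

lemma sinh_nat_mul (n : ℕ) (x : ℝ) : sinh (n * x) = (exp x ^ n - (exp x ^ n)⁻¹) / 2 := by
  rw [sinh_eq, ← exp_nat_mul, exp_neg]

lemma cosh_nat_mul (n : ℕ) (x : ℝ) : cosh (n * x) = (exp x ^ n + (exp x ^ n)⁻¹) / 2 := by
  rw [cosh_eq, ← exp_nat_mul, exp_neg]

lemma hyperbolic_combination_nonneg {x : ℝ} (hx : 0 ≤ x) :
    0 ≤ -90 * sinh (3 * x) - 90 * sinh (5 * x) + 70 * cosh (7 * x) + 20 * sinh (8 * x) := by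
  have h3 := sinh_nat_mul 3 x
  have h5 := sinh_nat_mul 5 x
  have h7 := cosh_nat_mul 7 x
  have h8 := sinh_nat_mul 8 x
  push_cast at h3 h5 h7 h8
  rw [h3, h5, h7, h8]
  have hu := exp_pos x
  have hpoly := poly_nonneg_of_one_le (one_le_exp hx)
  set u := exp x
  have hclear : -90 * ((u ^ 3 - (u ^ 3)⁻¹) / 2) - 90 * ((u ^ 5 - (u ^ 5)⁻¹) / 2)
      + 70 * ((u ^ 7 + (u ^ 7)⁻¹) / 2) + 20 * ((u ^ 8 - (u ^ 8)⁻¹) / 2)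
      = (20 * (u ^ 16 - 1) + 70 * (u ^ 15 + u) + 90 * (u ^ 5 + u ^ 3)
          - 90 * (u ^ 13 + u ^ 11)) / (2 * u ^ 8) := by
    field_simp
    ring
  rw [hclear]
  exact div_nonneg hpoly (by positivity)

lemma hasDerivAt_f (x : ℝ) :
    HasDerivAt f (-90 * sinh (3 * x) - 90 * sinh (5 * x) + 70 * cosh (7 * x)
      + 120 * (1 - K) * sinh (8 * x)) x := by
  have hlin (c : ℝ) : HasDerivAt (fun y : ℝ => c * y) c x := by
    simpa using (hasDerivAt_id x).const_mul c
  exact (((((hlin 3).cosh.const_mul (-30)).sub ((hlin 5).cosh.const_mul 18)).add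
    ((hlin 7).sinh.const_mul 10)).add ((hlin 8).cosh.const_mul (15 * (1 - K)))).congr_deriv
    (by ring)

theorem stmt_0 : MonotoneOn f (Set.Ici (0 : ℝ)) := by
  refine monotoneOn_of_hasDerivWithinAt_nonneg (convex_Ici 0)
    (fun x _ => (hasDerivAt_f x).continuousAt.continuousWithinAt)
    (fun x _ => (hasDerivAt_f x).hasDerivWithinAt) fun x hx => ?_
  rw [interior_Ici, Set.mem_Ioi] at hx
  have hsinh : 0 ≤ sinh (8 * x) := sinh_nonneg_iff.2 (by positivity)
  nlinarith [K_le_five_sixths, hyperbolic_combination_nonneg hx.le]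
end

section
/- Let K = ∫₀¹ (1/x²)(1/√(1-x⁴) - 1) dx. For each fixed a > 0, the improper integral ∫ₐ^∞ sinh(t)·(sinh(2t)/√(sinh²(2t) - sinh²(2a)) - 1) dt converges and is bounded above by K·cosh(a). -/
open Real MeasureTheory

noncomputable def kk : ℝ → ℝ := fun x => (1 / x ^ 2) * (1 / Real.sqrt (1 - x ^ 4) - 1)

lemma kk_eq {x : ℝ} (hx0 : 0 < x) (hx1 : x < 1) :
    kk x = x ^ 2 / (Real.sqrt (1 - x ^ 4) * (1 + Real.sqrt (1 - x ^ 4))) := by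
  have hs : 0 < 1 - x ^ 4 := by
    have := pow_lt_one₀ hx0.le hx1 (by norm_num : (4:ℕ) ≠ 0)
    linarith
  have h1 : 0 < Real.sqrt (1 - x ^ 4) := Real.sqrt_pos.2 hs
  have h2 : Real.sqrt (1 - x ^ 4) ^ 2 = 1 - x ^ 4 := Real.sq_sqrt hs.le
  unfold kk
  field_simp
  nlinarith [h1, h2]

lemma kk_nonneg {x : ℝ} (hx0 : 0 < x) (hx1 : x < 1) : 0 ≤ kk x := by
  have hs : 0 < 1 - x ^ 4 := by
    have := pow_lt_one₀ hx0.le hx1 (by norm_num : (4:ℕ) ≠ 0)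
    linarith
  have h1 : 0 < Real.sqrt (1 - x ^ 4) := Real.sqrt_pos.2 hs
  rw [kk_eq hx0 hx1]
  positivity

lemma kk_le {x : ℝ} (hx0 : 0 < x) (hx1 : x < 1) : kk x ≤ (1 - x) ^ (-(1/2) : ℝ) := by
  have hs : 0 < 1 - x ^ 4 := by
    have := pow_lt_one₀ hx0.le hx1 (by norm_num : (4:ℕ) ≠ 0)
    linarith
  have h1 : 0 < Real.sqrt (1 - x ^ 4) := Real.sqrt_pos.2 hs
  have h1x : 0 < 1 - x := by linarith
  have h2 : Real.sqrt (1 - x) ≤ Real.sqrt (1 - x ^ 4) := by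
    apply Real.sqrt_le_sqrt
    have : x ^ 4 ≤ x := by
      calc x ^ 4 ≤ x ^ 1 := pow_le_pow_of_le_one hx0.le hx1.le (by norm_num)
        _ = x := pow_one x
    linarith
  have h3 : 0 < Real.sqrt (1 - x) := Real.sqrt_pos.2 h1x
  have hrw : (1 - x) ^ (-(1/2) : ℝ) = 1 / Real.sqrt (1 - x) := by
    rw [Real.rpow_neg h1x.le, Real.sqrt_eq_rpow, one_div, inv_eq_one_div, one_div]
  rw [hrw, kk_eq hx0 hx1]
  calc x ^ 2 / (Real.sqrt (1 - x ^ 4) * (1 + Real.sqrt (1 - x ^ 4)))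
      ≤ 1 / (Real.sqrt (1 - x) * 1) := by
        apply div_le_div₀ (by norm_num) (by nlinarith) (by positivity)
        have : (1:ℝ) ≤ 1 + Real.sqrt (1 - x ^ 4) := by linarith
        nlinarith
    _ = 1 / Real.sqrt (1 - x) := by rw [mul_one]

lemma kk_contOn : ContinuousOn kk (Set.Ioo 0 1) := by
  intro x hx
  obtain ⟨hx0, hx1⟩ := hx
  have hs : 0 < 1 - x ^ 4 := by
    have := pow_lt_one₀ hx0.le hx1 (by norm_num : (4:ℕ) ≠ 0)
    linarith
  have h1 : Real.sqrt (1 - x ^ 4) ≠ 0 := (Real.sqrt_pos.2 hs).ne'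
  apply ContinuousAt.continuousWithinAt
  unfold kk
  apply ContinuousAt.mul
  · exact ContinuousAt.div continuousAt_const (by fun_prop) (by positivity)
  · apply ContinuousAt.sub _ continuousAt_const
    exact ContinuousAt.div continuousAt_const (by fun_prop) h1

lemma kk_integrable : IntegrableOn kk (Set.Ioo 0 1) := by
  have h0 : IntervalIntegrable (fun x : ℝ => x ^ (-(1/2) : ℝ)) volume 0 1 :=
    intervalIntegral.intervalIntegrable_rpow' (by norm_num)
  have h1 : IntervalIntegrable (fun x : ℝ => (1 - x) ^ (-(1/2) : ℝ)) volume 0 1 := by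
    have := (h0.comp_sub_left 1).symm
    simpa using this
  have hbound : IntegrableOn (fun x : ℝ => (1 - x) ^ (-(1/2) : ℝ)) (Set.Ioo 0 1) := by
    have := (intervalIntegrable_iff_integrableOn_Ioc_of_le (by norm_num : (0:ℝ) ≤ 1)).1 h1
    exact this.mono_set Set.Ioo_subset_Ioc_self
  apply Integrable.mono' hbound (kk_contOn.aestronglyMeasurable measurableSet_Ioo)
  filter_upwards [ae_restrict_mem measurableSet_Ioo] with x hx
  rw [Real.norm_eq_abs, abs_of_nonneg (kk_nonneg hx.1 hx.2)]
  exact kk_le hx.1 hx.2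

theorem stmt_9 (a : ℝ) (ha : 0 < a) :
    IntegrableOn
      (fun t => Real.sinh t *
        (Real.sinh (2 * t) / Real.sqrt (Real.sinh (2 * t) ^ 2 - Real.sinh (2 * a) ^ 2) - 1))
      (Set.Ioi a) ∧
    (∫ t in Set.Ioi a,
        Real.sinh t *
          (Real.sinh (2 * t) / Real.sqrt (Real.sinh (2 * t) ^ 2 - Real.sinh (2 * a) ^ 2) - 1))
      ≤ K * Real.cosh a := by
  set b : ℝ := Real.cosh a with hbdef
  have hb1 : 1 < b := by
    rw [hbdef]
    exact Real.one_lt_cosh.2 ha.ne'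
  have hb0 : 0 < b := by linarith
  set φ : ℝ → ℝ := fun t => b / Real.cosh t with hφ
  set φ' : ℝ → ℝ := fun t => -(b * Real.sinh t) / Real.cosh t ^ 2 with hφ'
  have hderiv : ∀ t ∈ Set.Ioi a, HasDerivWithinAt φ (φ' t) (Set.Ioi a) t := by
    intro t _
    have h := (hasDerivAt_const t b).div (Real.hasDerivAt_cosh t) (Real.cosh_pos t).ne'
    have h2 : φ' t = (0 * Real.cosh t - b * Real.sinh t) / Real.cosh t ^ 2 := by
      rw [hφ']; ring
    rw [h2]
    exact h.hasDerivWithinAt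
  have hcosh : ∀ t ∈ Set.Ioi a, b < Real.cosh t := by
    intro t ht
    have hat : a < t := ht
    rw [hbdef, Real.cosh_lt_cosh, abs_of_pos ha, abs_of_pos (ha.trans hat)]
    exact hat
  have hinj : Set.InjOn φ (Set.Ioi a) := by
    intro s hs t ht h
    have hcs : Real.cosh s = Real.cosh t := by
      have h1 : b / Real.cosh s = b / Real.cosh t := h
      field_simp [(Real.cosh_pos s).ne', (Real.cosh_pos t).ne', hb0.ne'] at h1
      linarith
    have hs' : a < s := hs
    have ht' : a < t := ht
    rcases lt_trichotomy s t with hlt | heq | hgt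
    · exfalso
      have habs : |s| < |t| := by
        rw [abs_of_pos (ha.trans hs'), abs_of_pos (ha.trans ht')]; exact hlt
      have := Real.cosh_lt_cosh.2 habs
      linarith
    · exact heq
    · exfalso
      have habs : |t| < |s| := by
        rw [abs_of_pos (ha.trans hs'), abs_of_pos (ha.trans ht')]; exact hgt
      have := Real.cosh_lt_cosh.2 habs
      linarith
  have himg : φ '' Set.Ioi a = Set.Ioo 0 1 := by
    ext x
    constructor
    · rintro ⟨t, ht, rfl⟩
      have h1 := hcosh t ht
      have h2 := Real.cosh_pos t
      exact ⟨by positivity, by rw [div_lt_one h2]; exact h1⟩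
    · rintro ⟨hx0, hx1⟩
      have hbx : b < b / x := by
        rw [lt_div_iff₀ hx0]; nlinarith
      have hge : (0:ℝ) ≤ (b / x) ^ 2 - 1 := by nlinarith
      set t : ℝ := Real.arsinh (Real.sqrt ((b / x) ^ 2 - 1)) with htdef
      have hct : Real.cosh t = b / x := by
        rw [htdef, Real.cosh_arsinh, Real.sq_sqrt hge,
          show 1 + ((b / x) ^ 2 - 1) = (b / x) ^ 2 by ring,
          Real.sqrt_sq (by positivity)]
      have ht0 : 0 ≤ t := Real.arsinh_nonneg_iff.2 (Real.sqrt_nonneg _)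
      have hat : a < t := by
        have h1 : Real.cosh a < Real.cosh t := by rw [hct, ← hbdef]; exact hbx
        have h2 := Real.cosh_lt_cosh.1 h1
        rw [abs_of_pos ha, abs_of_nonneg ht0] at h2
        exact h2
      refine ⟨t, hat, ?_⟩
      show b / Real.cosh t = x
      rw [hct]
      field_simp
  set G : ℝ → ℝ := fun t =>
    Real.sinh t * (Real.cosh t ^ 2 / Real.sqrt (Real.cosh t ^ 4 - b ^ 4) - 1) with hG
  have hkey : ∀ t ∈ Set.Ioi a, |φ' t| • kk (φ t) = b⁻¹ * G t := by
    intro t ht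
    have hu := hcosh t ht
    have hu0 : 0 < Real.cosh t := Real.cosh_pos t
    have hS : 0 < Real.sinh t := Real.sinh_pos_iff.2 (ha.trans ht)
    have hE : 0 < Real.cosh t ^ 4 - b ^ 4 := by
      have h4 : b ^ 4 < Real.cosh t ^ 4 := pow_lt_pow_left₀ hu hb0.le (by norm_num)
      linarith
    have hsqE : 0 < Real.sqrt (Real.cosh t ^ 4 - b ^ 4) := Real.sqrt_pos.2 hE
    have habs : |φ' t| = b * Real.sinh t / Real.cosh t ^ 2 := by
      rw [hφ']
      rw [abs_div, abs_neg, abs_of_nonneg (by positivity : (0:ℝ) ≤ b * Real.sinh t),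
        abs_of_nonneg (by positivity : (0:ℝ) ≤ Real.cosh t ^ 2)]
    have h14 : 1 - (b / Real.cosh t) ^ 4 = (Real.cosh t ^ 4 - b ^ 4) / Real.cosh t ^ 4 := by
      field_simp
    have hsq : Real.sqrt (1 - (b / Real.cosh t) ^ 4)
        = Real.sqrt (Real.cosh t ^ 4 - b ^ 4) / Real.cosh t ^ 2 := by
      rw [h14, Real.sqrt_div hE.le,
        show Real.cosh t ^ 4 = (Real.cosh t ^ 2) ^ 2 by ring,
        Real.sqrt_sq (by positivity)]
    show |φ' t| * kk (φ t) = b⁻¹ * G t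
    rw [habs, hG]
    show b * Real.sinh t / Real.cosh t ^ 2 *
      ((1 / (b / Real.cosh t) ^ 2) * (1 / Real.sqrt (1 - (b / Real.cosh t) ^ 4) - 1)) = _
    rw [hsq]
    field_simp
  have hint_iff := (integrableOn_image_iff_integrableOn_abs_deriv_smul
    measurableSet_Ioi hderiv hinj kk)
  rw [himg] at hint_iff
  have hGb_int : IntegrableOn (fun t => b⁻¹ * G t) (Set.Ioi a) :=
    (hint_iff.1 kk_integrable).congr_fun hkey measurableSet_Ioi
  have hGint : IntegrableOn G (Set.Ioi a) := by
    have h := hGb_int.const_mul b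
    have heq : (fun t => b * (b⁻¹ * G t)) = G := by
      funext t; field_simp
    rwa [heq] at h
  have hKb : ∫ t in Set.Ioi a, G t = K * b := by
    have h := integral_image_eq_integral_abs_deriv_smul measurableSet_Ioi hderiv hinj kk
    rw [himg, setIntegral_congr_fun measurableSet_Ioi hkey] at h
    rw [MeasureTheory.integral_const_mul] at h
    have hK : K = ∫ x in Set.Ioo (0:ℝ) 1, kk x := by
      rw [K, intervalIntegral.integral_of_le (by norm_num : (0:ℝ) ≤ 1),
        MeasureTheory.integral_Ioc_eq_integral_Ioo]
      rfl
    rw [← hK] at h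
    rw [h]
    field_simp
  set F : ℝ → ℝ := fun t => Real.sinh t *
    (Real.sinh (2 * t) / Real.sqrt (Real.sinh (2 * t) ^ 2 - Real.sinh (2 * a) ^ 2) - 1) with hF
  have hFG : ∀ t ∈ Set.Ioi a, 0 ≤ F t ∧ F t ≤ G t := by
    intro t ht
    have hta : a < t := ht
    have hS : 0 < Real.sinh t := Real.sinh_pos_iff.2 (ha.trans hta)
    have hu : b < Real.cosh t := hcosh t ht
    have hu0 : 0 < Real.cosh t := Real.cosh_pos t
    have hs2a : 0 < Real.sinh (2 * a) := Real.sinh_pos_iff.2 (by linarith)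
    have hs2t : Real.sinh (2 * a) < Real.sinh (2 * t) := Real.sinh_lt_sinh.2 (by linarith)
    have hD : 0 < Real.sinh (2 * t) ^ 2 - Real.sinh (2 * a) ^ 2 := by nlinarith
    have hE : 0 < Real.cosh t ^ 4 - b ^ 4 := by
      have h4 : b ^ 4 < Real.cosh t ^ 4 := pow_lt_pow_left₀ hu hb0.le (by norm_num)
      linarith
    have hsqD : 0 < Real.sqrt (Real.sinh (2 * t) ^ 2 - Real.sinh (2 * a) ^ 2) :=
      Real.sqrt_pos.2 hD
    have hsqE : 0 < Real.sqrt (Real.cosh t ^ 4 - b ^ 4) := Real.sqrt_pos.2 hE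
    have hDle : Real.sqrt (Real.sinh (2 * t) ^ 2 - Real.sinh (2 * a) ^ 2)
        ≤ Real.sinh (2 * t) := by
      have := Real.sqrt_le_sqrt (by nlinarith :
        Real.sinh (2 * t) ^ 2 - Real.sinh (2 * a) ^ 2 ≤ Real.sinh (2 * t) ^ 2)
      rwa [Real.sqrt_sq (hs2a.trans hs2t).le] at this
    constructor
    · have h1 : (1:ℝ) ≤ Real.sinh (2 * t) /
          Real.sqrt (Real.sinh (2 * t) ^ 2 - Real.sinh (2 * a) ^ 2) :=
        (one_le_div hsqD).2 hDle
      have : 0 ≤ Real.sinh (2 * t) /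
          Real.sqrt (Real.sinh (2 * t) ^ 2 - Real.sinh (2 * a) ^ 2) - 1 := by linarith
      exact mul_nonneg hS.le this
    · have hdiv : Real.sinh (2 * t) /
          Real.sqrt (Real.sinh (2 * t) ^ 2 - Real.sinh (2 * a) ^ 2)
          ≤ Real.cosh t ^ 2 / Real.sqrt (Real.cosh t ^ 4 - b ^ 4) := by
        rw [div_le_div_iff₀ hsqD hsqE]
        have key : (Real.sinh (2 * t) * Real.sqrt (Real.cosh t ^ 4 - b ^ 4)) ^ 2
            ≤ (Real.cosh t ^ 2 *
              Real.sqrt (Real.sinh (2 * t) ^ 2 - Real.sinh (2 * a) ^ 2)) ^ 2 := by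
          have e1 : Real.sinh (2 * t) = 2 * Real.sinh t * Real.cosh t := Real.sinh_two_mul t
          have e2 : Real.sinh (2 * a) = 2 * Real.sinh a * b := Real.sinh_two_mul a
          have c1 : Real.sinh t ^ 2 = Real.cosh t ^ 2 - 1 := by
            have := Real.cosh_sq t; linarith
          have c2 : Real.sinh a ^ 2 = b ^ 2 - 1 := by
            have := Real.cosh_sq a; rw [← hbdef] at this; linarith
          rw [mul_pow, mul_pow, Real.sq_sqrt hE.le, Real.sq_sqrt hD.le]
          rw [e1, e2]
          have hid : (2 * Real.sinh t * Real.cosh t) ^ 2 * (Real.cosh t ^ 4 - b ^ 4)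
              - (Real.cosh t ^ 2) ^ 2 *
                ((2 * Real.sinh t * Real.cosh t) ^ 2 - (2 * Real.sinh a * b) ^ 2)
              = 4 * Real.cosh t ^ 2 * b ^ 2 * (b ^ 2 - Real.cosh t ^ 2) := by
            linear_combination (-4 * Real.cosh t ^ 2 * b ^ 4) * c1
              + (4 * b ^ 2 * Real.cosh t ^ 4) * c2
          have hb2 : b ^ 2 < Real.cosh t ^ 2 := pow_lt_pow_left₀ hu hb0.le (by norm_num)
          nlinarith [hid, hb2, mul_pos (pow_pos hu0 2) (pow_pos hb0 2)]
        have hL : 0 ≤ Real.sinh (2 * t) * Real.sqrt (Real.cosh t ^ 4 - b ^ 4) := by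
          have h0 : 0 < Real.sinh (2 * t) := lt_trans hs2a hs2t
          exact mul_nonneg h0.le (Real.sqrt_nonneg _)
        have hR : 0 ≤ Real.cosh t ^ 2 *
            Real.sqrt (Real.sinh (2 * t) ^ 2 - Real.sinh (2 * a) ^ 2) := by positivity
        have := Real.sqrt_le_sqrt key
        rwa [Real.sqrt_sq hL, Real.sqrt_sq hR] at this
      show Real.sinh t * (Real.sinh (2 * t) /
          Real.sqrt (Real.sinh (2 * t) ^ 2 - Real.sinh (2 * a) ^ 2) - 1)
          ≤ Real.sinh t * (Real.cosh t ^ 2 / Real.sqrt (Real.cosh t ^ 4 - b ^ 4) - 1)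
      exact mul_le_mul_of_nonneg_left (sub_le_sub_right hdiv 1) hS.le
  have hmeasF : AEStronglyMeasurable F (volume.restrict (Set.Ioi a)) := by
    apply Measurable.aestronglyMeasurable
    rw [hF]
    have m1 : Measurable fun t : ℝ => Real.sinh (2 * t) :=
      Real.measurable_sinh.comp (measurable_id.const_mul 2)
    have m2 : Measurable fun t : ℝ =>
        Real.sqrt (Real.sinh (2 * t) ^ 2 - Real.sinh (2 * a) ^ 2) :=
      Real.continuous_sqrt.measurable.comp ((m1.pow_const 2).sub measurable_const)
    exact Real.measurable_sinh.mul ((m1.div m2).sub measurable_const)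
  have hFint : IntegrableOn F (Set.Ioi a) := by
    apply hGint.mono' hmeasF
    filter_upwards [ae_restrict_mem measurableSet_Ioi] with t ht
    rw [Real.norm_eq_abs, abs_of_nonneg (hFG t ht).1]
    exact (hFG t ht).2
  refine ⟨hFint, ?_⟩
  calc (∫ t in Set.Ioi a, F t)
      ≤ ∫ t in Set.Ioi a, G t :=
        setIntegral_mono_on hFint hGint measurableSet_Ioi (fun t ht => (hFG t ht).2)
    _ = K * b := hKb
end

section
/- For all a > 0 and t > 0, the following bound on the numerator holds: 5·cosh(a+t) - 3·cosh(3a+3t) - 3·cosh(5a+t) + cosh(7a+3t) ≥ -3·cosh(3a)·e^{3t} - 3·cosh(5a)·e^{t} + sinh(7a)·e^{3t}. -/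
theorem stmt_13 (a t : ℝ) (ha : 0 < a) (ht : 0 < t) :
    5 * Real.cosh (a + t) - 3 * Real.cosh (3 * a + 3 * t) - 3 * Real.cosh (5 * a + t)
        + Real.cosh (7 * a + 3 * t) ≥
      -3 * Real.cosh (3 * a) * Real.exp (3 * t) - 3 * Real.cosh (5 * a) * Real.exp t
        + Real.sinh (7 * a) * Real.exp (3 * t) := by
  have h1 : Real.exp (-(3 * a)) * Real.exp (3 * t) ≥ Real.exp (-(3 * a)) * Real.exp (-(3 * t)) :=
    mul_le_mul_of_nonneg_left (Real.exp_le_exp.2 (by linarith)) (Real.exp_pos _).le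
  have h2 : Real.exp (-(5 * a)) * Real.exp t ≥ Real.exp (-(5 * a)) * Real.exp (-t) :=
    mul_le_mul_of_nonneg_left (Real.exp_le_exp.2 (by linarith)) (Real.exp_pos _).le
  have p1 : 0 < Real.exp a * Real.exp t := mul_pos (Real.exp_pos _) (Real.exp_pos _)
  have p2 : 0 < Real.exp (-a) * Real.exp (-t) := mul_pos (Real.exp_pos _) (Real.exp_pos _)
  have p3 : 0 < Real.exp (-(7 * a)) * Real.exp (3 * t) := mul_pos (Real.exp_pos _) (Real.exp_pos _)
  have p4 : 0 < Real.exp (-(7 * a)) * Real.exp (-(3 * t)) :=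
    mul_pos (Real.exp_pos _) (Real.exp_pos _)
  simp only [Real.cosh_eq, Real.sinh_eq, neg_add, Real.exp_add]
  linarith
end

section
/- Fix a > 0 and let Θ(r) = A(r)/(2π(cosh r - 1)) where A(r) = ∫ₐʳ 4π·sinh(t)·sinh(2t)/√(sinh²(2t)-sinh²(2a)) dt is the area of the compact catenoid portion Σ_{a,r}. Then Θ has a finite limit as r → ∞. -/
open Real Filter

noncomputable def A (a r : ℝ) : ℝ :=
  ∫ t in a..r,
    4 * π * Real.sinh t * Real.sinh (2 * t) /
      Real.sqrt (Real.sinh (2 * t) ^ 2 - Real.sinh (2 * a) ^ 2)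

/-!
Split the integrand as `4π sinh t` (the radial area density of two totally geodesic disks,
whose area is `4π (cosh r - 1)`) plus a nonnegative excess. With `s = sinh 2a` and
`x = sinh 2t`, the excess is `4π sinh t (x / √(x² - s²) - 1) ≤ 2π s² / (cosh t √(x² - s²))`,
and `x² - s² ≥ 4 s (t - a)`, so it is dominated by `C e^{-(t-a)} (t-a)^{-1/2}`, which is
integrable on `(a, ∞)` by the convergence of `Γ(1/2)`. Hence `A(r) - 4π cosh r` converges,
and `Θ(r) → 2`.
-/

open MeasureTheory Set Topology

lemma Real.exp_le_two_mul_cosh (x : ℝ) : exp x ≤ 2 * cosh x := by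
  rw [cosh_eq]
  linarith [exp_pos (-x)]

lemma Real.tendsto_cosh_atTop : Tendsto cosh atTop atTop :=
  tendsto_atTop_mono (fun x => by linarith [exp_le_two_mul_cosh x])
    (tendsto_exp_atTop.atTop_div_const two_pos)

lemma Real.sub_le_sinh_sub_sinh {u v : ℝ} (h : v ≤ u) : u - v ≤ sinh u - sinh v := by
  linarith [sinh_sub_id_strictMono.monotone h]

lemma Filter.Tendsto.div_of_tendsto_sub_mul {α : Type*} {l : Filter α} {f g : α → ℝ} {c L : ℝ}
    (h : Tendsto (fun x => f x - c * g x) l (𝓝 L)) (hg : Tendsto g l atTop) :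
    Tendsto (fun x => f x / g x) l (𝓝 c) := by
  have := (h.div_atTop hg).add_const c
  rw [zero_add] at this
  refine this.congr' ?_
  filter_upwards [hg.eventually_gt_atTop 0] with x hx
  field_simp
  ring

lemma one_le_div_sqrt_sq_sub_sq {s x : ℝ} (hs : 0 ≤ s) (hsx : s < x) :
    1 ≤ x / √(x ^ 2 - s ^ 2) := by
  have hd : 0 < √(x ^ 2 - s ^ 2) := Real.sqrt_pos.mpr (by nlinarith)
  rw [one_le_div hd, Real.sqrt_le_left (by linarith)]
  nlinarith

lemma div_sqrt_sq_sub_sq_sub_one_le {s x : ℝ} (hs : 0 ≤ s) (hsx : s < x) :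
    x / √(x ^ 2 - s ^ 2) - 1 ≤ s ^ 2 / (x * √(x ^ 2 - s ^ 2)) := by
  set d := √(x ^ 2 - s ^ 2)
  have hd : 0 < d := Real.sqrt_pos.mpr (by nlinarith)
  have hd2 : d ^ 2 = x ^ 2 - s ^ 2 := Real.sq_sqrt (by nlinarith)
  have hdx : d ≤ x := by nlinarith
  rw [div_sub_one hd.ne', div_le_div_iff₀ hd (mul_pos (hs.trans_lt hsx) hd)]
  nlinarith [mul_le_mul_of_nonneg_left hdx hd.le]

lemma four_mul_sinh_mul_sub_le {a t : ℝ} (ha : 0 ≤ a) (hat : a ≤ t) :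
    4 * sinh (2 * a) * (t - a) ≤ sinh (2 * t) ^ 2 - sinh (2 * a) ^ 2 := by
  have hdiff : 2 * t - 2 * a ≤ sinh (2 * t) - sinh (2 * a) := sub_le_sinh_sub_sinh (by linarith)
  have hs : 0 ≤ sinh (2 * a) := sinh_nonneg_iff.mpr (by linarith)
  have hsum : 2 * sinh (2 * a) ≤ sinh (2 * t) + sinh (2 * a) := by
    linarith [sinh_le_sinh.mpr (by linarith : 2 * a ≤ 2 * t)]
  nlinarith [mul_le_mul hdiff hsum (by positivity) (by linarith)]

noncomputable def areaExcess (a t : ℝ) : ℝ :=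
  4 * π * sinh t * sinh (2 * t) / √(sinh (2 * t) ^ 2 - sinh (2 * a) ^ 2) - 4 * π * sinh t

lemma areaExcess_eq_mul (a t : ℝ) :
    areaExcess a t =
      4 * π * sinh t * (sinh (2 * t) / √(sinh (2 * t) ^ 2 - sinh (2 * a) ^ 2) - 1) := by
  unfold areaExcess
  ring

lemma areaExcess_nonneg {a t : ℝ} (ha : 0 < a) (hat : a < t) : 0 ≤ areaExcess a t := by
  have hratio : 0 ≤ sinh (2 * t) / √(sinh (2 * t) ^ 2 - sinh (2 * a) ^ 2) - 1 :=
    sub_nonneg.mpr (one_le_div_sqrt_sq_sub_sq (sinh_nonneg_iff.mpr (by linarith))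
      (sinh_lt_sinh.mpr (by linarith)))
  have := sinh_pos_iff.mpr (ha.trans hat)
  have := pi_pos
  rw [areaExcess_eq_mul a t]
  positivity

lemma areaExcess_le {a t : ℝ} (ha : 0 < a) (hat : a < t) :
    areaExcess a t ≤
      2 * π * sinh (2 * a) ^ 2 * exp (-a) / √(sinh (2 * a)) * (exp (-(t - a)) / √(t - a)) := by
  set s := sinh (2 * a)
  set x := sinh (2 * t)
  set d := √(x ^ 2 - s ^ 2)
  have hs : 0 < s := sinh_pos_iff.mpr (by linarith)
  have hsx : s < x := sinh_lt_sinh.mpr (by linarith)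
  have hsinh : 0 < sinh t := sinh_pos_iff.mpr (ha.trans hat)
  have hd : 2 * √s * √(t - a) ≤ d := by
    have : √(4 * s * (t - a)) ≤ d := Real.sqrt_le_sqrt (four_mul_sinh_mul_sub_le ha.le hat.le)
    rwa [Real.sqrt_mul (by positivity), Real.sqrt_mul (by norm_num),
      show (4 : ℝ) = 2 ^ 2 by norm_num, Real.sqrt_sq (by norm_num)] at this
  have hta : 0 < √(t - a) := Real.sqrt_pos.mpr (by linarith)
  have := pi_pos
  calc areaExcess a t = 4 * π * sinh t * (x / d - 1) := areaExcess_eq_mul a t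
    _ ≤ 4 * π * sinh t * (s ^ 2 / (x * d)) := by
      gcongr
      exact div_sqrt_sq_sub_sq_sub_one_le hs.le hsx
    _ = 2 * π * s ^ 2 / (cosh t * d) := by
      rw [show x = 2 * sinh t * cosh t from sinh_two_mul t]
      field_simp
      norm_num
    _ ≤ 2 * π * s ^ 2 / (exp t / 2 * (2 * √s * √(t - a))) := by
      gcongr
      linarith [exp_le_two_mul_cosh t]
    _ = _ := by
      rw [show -(t - a) = -t + a by ring, exp_add, exp_neg t, exp_neg a]
      field_simp

lemma integrableOn_exp_neg_sub_div_sqrt_sub (a : ℝ) :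
    IntegrableOn (fun t => exp (-(t - a)) / √(t - a)) (Ioi a) := by
  have h := GammaIntegral_convergent (s := 1 / 2) (by norm_num)
  rw [← (measurePreserving_sub_right volume a).integrableOn_comp_preimage
    (measurableEmbedding_subRight a), preimage_sub_const_Ioi, zero_add] at h
  refine h.congr_fun (fun t ht => ?_) measurableSet_Ioi
  have : 0 ≤ t - a := by linarith [mem_Ioi.mp ht]
  simp only [Function.comp, sqrt_eq_rpow, ← rpow_neg this, div_eq_mul_inv]
  norm_num

lemma integrableOn_areaExcess {a : ℝ} (ha : 0 < a) : IntegrableOn (areaExcess a) (Ioi a) := by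
  refine ((integrableOn_exp_neg_sub_div_sqrt_sub a).const_mul
    (2 * π * sinh (2 * a) ^ 2 * exp (-a) / √(sinh (2 * a)))).mono' ?_ ?_
  · exact (by unfold areaExcess; fun_prop : Measurable (areaExcess a)).aestronglyMeasurable
  · refine (ae_restrict_iff' measurableSet_Ioi).mpr (ae_of_all _ fun t ht => ?_)
    rw [Real.norm_of_nonneg (areaExcess_nonneg ha ht)]
    exact areaExcess_le ha ht

lemma A_eq_integral_areaExcess_add {a r : ℝ} (ha : 0 < a) (hr : a ≤ r) :
    A a r = (∫ t in a..r, areaExcess a t) + 4 * π * (cosh r - cosh a) := by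
  have hexcess : IntervalIntegrable (areaExcess a) volume a r :=
    (intervalIntegrable_iff_integrableOn_Ioc_of_le hr).mpr
      ((integrableOn_areaExcess ha).mono_set Ioc_subset_Ioi_self)
  have hdisk : ∫ t in a..r, 4 * π * sinh t = 4 * π * (cosh r - cosh a) := by
    rw [intervalIntegral.integral_const_mul, intervalIntegral.integral_deriv_eq_sub'
      cosh Real.deriv_cosh (fun t _ => differentiableAt_cosh) continuous_sinh.continuousOn]
  rw [← hdisk, ← intervalIntegral.integral_add hexcess
    ((by fun_prop : Continuous fun t => 4 * π * sinh t).intervalIntegrable a r)]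
  simp only [areaExcess, sub_add_cancel, A]

lemma tendsto_A_sub_four_pi_cosh {a : ℝ} (ha : 0 < a) :
    Tendsto (fun r => A a r - 4 * π * cosh r) atTop
      (𝓝 ((∫ t in Ioi a, areaExcess a t) - 4 * π * cosh a)) := by
  refine ((intervalIntegral_tendsto_integral_Ioi a (integrableOn_areaExcess ha)
    tendsto_id).sub_const _).congr' ?_
  filter_upwards [eventually_ge_atTop a] with r hr
  rw [A_eq_integral_areaExcess_add ha hr, id]
  ring

theorem stmt_17 (a : ℝ) (ha : 0 < a) :
    ∃ L : ℝ, Tendsto (fun r => A a r / (2 * π * (Real.cosh r - 1))) atTop (nhds L) := by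
  refine ⟨2, Tendsto.div_of_tendsto_sub_mul
    (((tendsto_A_sub_four_pi_cosh ha).add_const (4 * π)).congr fun r => by ring) ?_⟩
  exact (tendsto_atTop_add_const_right _ (-1) tendsto_cosh_atTop).const_mul_atTop
    (by positivity)
end
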